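/- arXiv:1801.06767 — 7 statements merged into one kernel-verified Lean document; each statement's English description precedes it below -/
import Mathlib

section
/- For every y₀ > 0 there exists a map f from the half-plane Ω = {(x,y) ∈ ℝ² : y > y₀} into Euclidean ℝ³ which is differentiable on Ω with locally Lipschitz derivative (i.e. of class C^{1,1}), and whose induced first fundamental form equals the Lobachevsky metric: for every (x,y) ∈ Ω, ⟨∂ₓf(x,y), ∂ₓf(x,y)⟩ = 1/y², ⟨∂ₓf(x,y), ∂_yf(x,y)⟩ = 0, and ⟨∂_yf(x,y), ∂_yf(x,y)⟩ = 1/y². In other words, the standard hyperbolic plane restricted to Ω admits a C^{1,1} isometric immersion into ℝ³. -/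
/-- A map `f : Ω ⊆ ℝ² → ℝ³` is a `C^{1,1}` isometric immersion of the metric
`E dx² + 2F dxdy + G dy²` on `Ω` if it is differentiable on `Ω`, its derivative is
locally Lipschitz on `Ω`, and the induced first fundamental form equals the metric. -/
def IsC11IsometricImmersion (Ω : Set (ℝ × ℝ)) (E F G : ℝ × ℝ → ℝ)
    (f : ℝ × ℝ → EuclideanSpace ℝ (Fin 3)) : Prop :=
  (∀ p ∈ Ω, DifferentiableAt ℝ f p) ∧
  (∀ p ∈ Ω, ∃ ε > (0 : ℝ), ∃ K : NNReal,
      LipschitzOnWith K (fderiv ℝ f) (Metric.ball p ε ∩ Ω)) ∧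
  (∀ p ∈ Ω,
      (inner ℝ (fderiv ℝ f p (1, 0)) (fderiv ℝ f p (1, 0)) : ℝ) = E p ∧
      (inner ℝ (fderiv ℝ f p (1, 0)) (fderiv ℝ f p (0, 1)) : ℝ) = F p ∧
      (inner ℝ (fderiv ℝ f p (0, 1)) (fderiv ℝ f p (0, 1)) : ℝ) = G p)

/-! The pseudosphere realises the hyperbolic metric. Rotating the tractrix profile
`(ρ, z) = (c / y, arcosh (y / c) - √(y² - c²) / y)` by the angle `x / c` gives a surface of
revolution with first fundamental form `(ρ / c)² dx² + (ρ'² + z'²) dy² = (dx² + dy²) / y²`.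
For `y > c`, i.e. before the tractrix reaches its cusp, this surface is smooth, so in
particular `C^{1,1}`. -/

open Real

section Calculus

variable {𝕜 F : Type*} [NontriviallyNormedField 𝕜] [NormedAddCommGroup F] [NormedSpace 𝕜 F]

theorem HasFDerivAt.hasDerivAt_slice_fst {f : 𝕜 × 𝕜 → F} {f' : 𝕜 × 𝕜 →L[𝕜] F} {p : 𝕜 × 𝕜}
    (hf : HasFDerivAt f f' p) : HasDerivAt (fun x => f (x, p.2)) (f' (1, 0)) p.1 :=
  hf.comp_hasDerivAt p.1 ((hasDerivAt_id p.1).prodMk (hasDerivAt_const p.1 p.2))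

theorem HasFDerivAt.hasDerivAt_slice_snd {f : 𝕜 × 𝕜 → F} {f' : 𝕜 × 𝕜 →L[𝕜] F} {p : 𝕜 × 𝕜}
    (hf : HasFDerivAt f f' p) : HasDerivAt (fun y => f (p.1, y)) (f' (0, 1)) p.2 :=
  hf.comp_hasDerivAt p.2 ((hasDerivAt_const p.2 p.1).prodMk (hasDerivAt_id p.2))

theorem hasDerivAt_toLp_of_forall {ι : Type*} [Fintype ι] {q : ENNReal} [Fact (1 ≤ q)]
    {φ : 𝕜 → ι → F} {φ' : ι → F} {x : 𝕜} (hφ : ∀ i, HasDerivAt (fun x => φ x i) (φ' i) x) :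
    HasDerivAt (fun x => WithLp.toLp q (φ x)) (WithLp.toLp q φ') x :=
  (PiLp.hasFDerivAt_toLp q (φ x)).comp_hasDerivAt x (hasDerivAt_pi.2 hφ)

end Calculus

theorem ContDiffAt.exists_ball_lipschitzOnWith_fderiv {𝕜 E F : Type*} [RCLike 𝕜]
    [NormedAddCommGroup E] [NormedSpace 𝕜 E] [NormedAddCommGroup F] [NormedSpace 𝕜 F]
    {f : E → F} {p : E} (hf : ContDiffAt 𝕜 2 f p) :
    ∃ ε > (0 : ℝ), ∃ K, LipschitzOnWith K (fderiv 𝕜 f) (Metric.ball p ε) := by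
  obtain ⟨K, t, ht, hK⟩ := (hf.fderiv_right (m := 1) le_rfl).exists_lipschitzOnWith
  obtain ⟨ε, hε, hball⟩ := Metric.mem_nhds_iff.1 ht
  exact ⟨ε, hε, K, hK.mono hball⟩

theorem isC11IsometricImmersion_of_contDiffAt {Ω : Set (ℝ × ℝ)} {E F G : ℝ × ℝ → ℝ}
    {f : ℝ × ℝ → EuclideanSpace ℝ (Fin 3)} (hf : ∀ p ∈ Ω, ContDiffAt ℝ 2 f p)
    (hform : ∀ p ∈ Ω,
      inner ℝ (fderiv ℝ f p (1, 0)) (fderiv ℝ f p (1, 0)) = E p ∧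
      inner ℝ (fderiv ℝ f p (1, 0)) (fderiv ℝ f p (0, 1)) = F p ∧
      inner ℝ (fderiv ℝ f p (0, 1)) (fderiv ℝ f p (0, 1)) = G p) :
    IsC11IsometricImmersion Ω E F G f :=
  ⟨fun p hp => (hf p hp).differentiableAt two_ne_zero,
    fun p hp => by
      obtain ⟨ε, hε, K, hK⟩ := (hf p hp).exists_ball_lipschitzOnWith_fderiv
      exact ⟨ε, hε, K, hK.mono Set.inter_subset_left⟩,
    hform⟩

noncomputable def surfaceOfRevolution (ω : ℝ) (r h : ℝ → ℝ) (p : ℝ × ℝ) :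
    EuclideanSpace ℝ (Fin 3) :=
  !₂[r p.2 * cos (ω * p.1), r p.2 * sin (ω * p.1), h p.2]

noncomputable def tractrixHeight (c y : ℝ) : ℝ := arcosh (y / c) - √(y ^ 2 - c ^ 2) / y

section SurfaceOfRevolution

variable {ω : ℝ} {r h : ℝ → ℝ}

theorem contDiffAt_surfaceOfRevolution {n : WithTop ℕ∞} {p : ℝ × ℝ}
    (hr : ContDiffAt ℝ n r p.2) (hh : ContDiffAt ℝ n h p.2) :
    ContDiffAt ℝ n (surfaceOfRevolution ω r h) p := by
  have hr' : ContDiffAt ℝ n (fun q : ℝ × ℝ => r q.2) p := hr.comp p contDiffAt_snd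
  have hangle : ContDiffAt ℝ n (fun q : ℝ × ℝ => ω * q.1) p := contDiffAt_fst.const_smul ω
  refine (PiLp.contDiff_toLp.contDiffAt).comp p (contDiffAt_pi.2 fun i => ?_)
  fin_cases i
  · exact hr'.mul (contDiff_cos.contDiffAt.comp p hangle)
  · exact hr'.mul (contDiff_sin.contDiffAt.comp p hangle)
  · exact hh.comp p contDiffAt_snd

theorem hasDerivAt_surfaceOfRevolution_slice_fst (x y : ℝ) :
    HasDerivAt (fun x => surfaceOfRevolution ω r h (x, y))
      !₂[-(ω * r y * sin (ω * x)), ω * r y * cos (ω * x), 0] x := by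
  refine hasDerivAt_toLp_of_forall fun i => ?_
  have hangle : HasDerivAt (fun x => ω * x) ω x := by simpa using (hasDerivAt_id x).const_mul ω
  fin_cases i <;>
    dsimp only [Fin.zero_eta, Fin.mk_one, Fin.reduceFinMk, Fin.isValue, Matrix.cons_val_zero,
      Matrix.cons_val_one, Matrix.cons_val]
  · exact (((hasDerivAt_cos _).comp x hangle).const_mul (r y)).congr_deriv (by ring)
  · exact (((hasDerivAt_sin _).comp x hangle).const_mul (r y)).congr_deriv (by ring)
  · exact hasDerivAt_const x (h y)

theorem hasDerivAt_surfaceOfRevolution_slice_snd {x y r' h' : ℝ} (hr : HasDerivAt r r' y)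
    (hh : HasDerivAt h h' y) :
    HasDerivAt (fun y => surfaceOfRevolution ω r h (x, y))
      !₂[r' * cos (ω * x), r' * sin (ω * x), h'] y := by
  refine hasDerivAt_toLp_of_forall fun i => ?_
  fin_cases i <;>
    dsimp only [Fin.zero_eta, Fin.mk_one, Fin.reduceFinMk, Fin.isValue, Matrix.cons_val_zero,
      Matrix.cons_val_one, Matrix.cons_val]
  · exact hr.mul_const _
  · exact hr.mul_const _
  · exact hh

theorem isC11IsometricImmersion_surfaceOfRevolution {Ω : Set (ℝ × ℝ)} {E G : ℝ × ℝ → ℝ}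
    (hr : ∀ p ∈ Ω, ContDiffAt ℝ 2 r p.2) (hh : ∀ p ∈ Ω, ContDiffAt ℝ 2 h p.2)
    (hE : ∀ p ∈ Ω, (ω * r p.2) ^ 2 = E p)
    (hG : ∀ p ∈ Ω, deriv r p.2 ^ 2 + deriv h p.2 ^ 2 = G p) :
    IsC11IsometricImmersion Ω E (fun _ => 0) G (surfaceOfRevolution ω r h) := by
  have hf : ∀ p ∈ Ω, ContDiffAt ℝ 2 (surfaceOfRevolution ω r h) p := fun p hp =>
    contDiffAt_surfaceOfRevolution (hr p hp) (hh p hp)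
  refine isC11IsometricImmersion_of_contDiffAt hf fun p hp => ?_
  have hdf := ((hf p hp).differentiableAt two_ne_zero).hasFDerivAt
  rw [hdf.hasDerivAt_slice_fst.unique (hasDerivAt_surfaceOfRevolution_slice_fst p.1 p.2),
    hdf.hasDerivAt_slice_snd.unique (hasDerivAt_surfaceOfRevolution_slice_snd
      ((hr p hp).differentiableAt two_ne_zero).hasDerivAt
      ((hh p hp).differentiableAt two_ne_zero).hasDerivAt), ← hE p hp, ← hG p hp]
  have pyth := sin_sq_add_cos_sq (ω * p.1)
  simp only [PiLp.inner_apply, RCLike.inner_apply, conj_trivial, Fin.sum_univ_three, Fin.isValue,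
    Matrix.cons_val]
  refine ⟨?_, ?_, ?_⟩
  · linear_combination (ω * r p.2) ^ 2 * pyth
  · ring
  · linear_combination deriv r p.2 ^ 2 * pyth

end SurfaceOfRevolution

section Tractrix

variable {c y : ℝ}

theorem hasDerivAt_tractrixHeight (hc : 0 < c) (hy : c < y) :
    HasDerivAt (tractrixHeight c) (√(y ^ 2 - c ^ 2) / y ^ 2) y := by
  have hy0 : 0 < y := hc.trans hy
  have hpos : 0 < y ^ 2 - c ^ 2 := by nlinarith
  set s := √(y ^ 2 - c ^ 2) with hs_def
  have hs : 0 < s := Real.sqrt_pos.2 hpos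
  have hs2 : s ^ 2 = y ^ 2 - c ^ 2 := Real.sq_sqrt hpos.le
  have hscaled : √((y / c) ^ 2 - 1) = s / c := by
    rw [show (y / c) ^ 2 - 1 = (s / c) ^ 2 by field_simp; linarith, Real.sqrt_sq (by positivity)]
  have hs' : HasDerivAt (fun t => √(t ^ 2 - c ^ 2)) (y / s) y := by
    convert ((hasDerivAt_pow 2 y).sub_const (c ^ 2)).sqrt hpos.ne' using 1
    rw [← hs_def]
    field_simp
    push_cast
    ring
  have harcosh : HasDerivAt (fun t => arcosh (t / c)) s⁻¹ y := by
    have hmem : y / c ∈ Set.Ioi 1 := (one_lt_div hc).2 hy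
    refine ((hasDerivAt_arcosh hmem).comp y ((hasDerivAt_id' y).div_const c)).congr_deriv ?_
    rw [hscaled]
    field_simp
  refine (harcosh.sub (hs'.div (hasDerivAt_id' y) hy0.ne')).congr_deriv ?_
  rw [← hs_def]
  field_simp
  ring

theorem contDiffAt_tractrixHeight {n : WithTop ℕ∞} (hc : 0 < c) (hy : c < y) :
    ContDiffAt ℝ n (tractrixHeight c) y := by
  have hy0 : 0 < y := hc.trans hy
  have hpos : 0 < y ^ 2 - c ^ 2 := by nlinarith
  exact ((contDiffAt_arcosh ((one_lt_div hc).2 hy)).comp y (contDiffAt_id.div_const c)).sub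
    (((contDiffAt_id.pow 2).sub contDiffAt_const).sqrt hpos.ne' |>.div contDiffAt_id hy0.ne')

end Tractrix

/-- The standard hyperbolic (Lobachevsky) plane, restricted to any half-plane
`{y > y₀}` with `y₀ > 0`, admits a `C^{1,1}` isometric immersion into `ℝ³`. -/
theorem lobachevsky_C11_isometric_immersion (y₀ : ℝ) (hy₀ : 0 < y₀) :
    ∃ f : ℝ × ℝ → EuclideanSpace ℝ (Fin 3),
      IsC11IsometricImmersion {p : ℝ × ℝ | y₀ < p.2}
        (fun p => 1 / p.2 ^ 2) (fun _ => 0) (fun p => 1 / p.2 ^ 2) f := by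
  refine ⟨surfaceOfRevolution y₀⁻¹ (y₀ / ·) (tractrixHeight y₀),
    isC11IsometricImmersion_surfaceOfRevolution
      (fun p hp => contDiffAt_const.div contDiffAt_id (hy₀.trans hp).ne')
      (fun p hp => contDiffAt_tractrixHeight hy₀ hp) (fun p _ => ?_) (fun p hp => ?_)⟩
  · field_simp
  · have hy : 0 < p.2 := hy₀.trans hp
    have hs := Real.sq_sqrt (by nlinarith [hp.out] : 0 ≤ p.2 ^ 2 - y₀ ^ 2)
    rw [deriv_const_div_id, (hasDerivAt_tractrixHeight hy₀ hp).deriv]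
    field_simp
    linear_combination hs
end

section
/- Let A > 0, B ≥ 0 and C be real constants with B² − 4AC < 0. For every y₀ > 0 there exists a map f from Ω = ℝ × (y₀, ∞) into Euclidean ℝ³ which is differentiable on Ω with locally Lipschitz derivative (class C^{1,1}) and satisfies, for every (x,y) ∈ Ω: ⟨∂ₓf, ∂ₓf⟩ = A y² + B y + C, ⟨∂ₓf, ∂_yf⟩ = 0, ⟨∂_yf, ∂_yf⟩ = 1. That is, the helicoid-type metric g = (Ay² + By + C) dx² + dy² admits a C^{1,1} isometric immersion of Ω into ℝ³. -/
open Real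

theorem IsC11IsometricImmersion.of_contDiff {Ω : Set (ℝ × ℝ)} {E F G : ℝ × ℝ → ℝ}
    {f : ℝ × ℝ → EuclideanSpace ℝ (Fin 3)} (hf : ContDiff ℝ 2 f)
    (hform : ∀ p ∈ Ω,
      (inner ℝ (fderiv ℝ f p (1, 0)) (fderiv ℝ f p (1, 0)) : ℝ) = E p ∧
      (inner ℝ (fderiv ℝ f p (1, 0)) (fderiv ℝ f p (0, 1)) : ℝ) = F p ∧
      (inner ℝ (fderiv ℝ f p (0, 1)) (fderiv ℝ f p (0, 1)) : ℝ) = G p) :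
    IsC11IsometricImmersion Ω E F G f := by
  refine ⟨fun p _ => hf.differentiable two_ne_zero p, fun p _ => ?_, hform⟩
  obtain ⟨K, t, ht, hK⟩ := (hf.fderiv_right (m := 1) le_rfl).locallyLipschitz p
  obtain ⟨ε, hε, hball⟩ := Metric.mem_nhds_iff.1 ht
  exact ⟨ε, hε, K, hK.mono fun q hq => hball hq.1⟩

theorem HasFDerivAt.apply_one_zero_eq {𝕜 F : Type*} [NontriviallyNormedField 𝕜]
    [NormedAddCommGroup F] [NormedSpace 𝕜 F] {f : 𝕜 × 𝕜 → F} {f' : 𝕜 × 𝕜 →L[𝕜] F} {p : 𝕜 × 𝕜}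
    {v : F} (hf : HasFDerivAt f f' p) (hv : HasDerivAt (fun x => f (x, p.2)) v p.1) :
    f' (1, 0) = v :=
  (hf.comp_hasDerivAt p.1 ((hasDerivAt_id p.1).prodMk (hasDerivAt_const p.1 p.2))).unique hv

theorem HasFDerivAt.apply_zero_one_eq {𝕜 F : Type*} [NontriviallyNormedField 𝕜]
    [NormedAddCommGroup F] [NormedSpace 𝕜 F] {f : 𝕜 × 𝕜 → F} {f' : 𝕜 × 𝕜 →L[𝕜] F} {p : 𝕜 × 𝕜}
    {v : F} (hf : HasFDerivAt f f' p) (hv : HasDerivAt (fun y => f (p.1, y)) v p.2) :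
    f' (0, 1) = v :=
  (hf.comp_hasDerivAt p.2 ((hasDerivAt_const p.2 p.1).prodMk (hasDerivAt_id p.2))).unique hv

theorem HasDerivAt.toLp_vec3 {a b c : ℝ → ℝ} {a' b' c' x : ℝ} (ha : HasDerivAt a a' x)
    (hb : HasDerivAt b b' x) (hc : HasDerivAt c c' x) :
    HasDerivAt (fun t => !₂[a t, b t, c t]) !₂[a', b', c'] x := by
  have hnil : HasDerivAt (fun _ => ![]) (![] : Fin 0 → ℝ) x :=
    (hasDerivAt_const x _).congr_deriv (Subsingleton.elim _ _)
  have hvec : HasDerivAt (fun t => ![a t, b t, c t]) ![a', b', c'] x :=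
    ha.finCons (hb.finCons (hc.finCons hnil))
  exact (PiLp.hasFDerivAt_toLp 2 _).comp_hasDerivAt x hvec

theorem EuclideanSpace.inner_vec3 (a b c a' b' c' : ℝ) :
    (inner ℝ !₂[a, b, c] !₂[a', b', c'] : ℝ) = a * a' + b * b' + c * c' := by
  simp only [PiLp.inner_apply, RCLike.inner_apply, ringHom_apply, Fin.sum_univ_three,
    Fin.isValue, Matrix.cons_val_zero, Matrix.cons_val_one, Matrix.cons_val]
  ring

noncomputable def helicoid (ω c k : ℝ) (p : ℝ × ℝ) : EuclideanSpace ℝ (Fin 3) :=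
  !₂[(p.2 + c) * cos (ω * p.1), (p.2 + c) * sin (ω * p.1), k * p.1]

namespace helicoid

variable (ω c k : ℝ)

theorem contDiff {n : WithTop ℕ∞} : ContDiff ℝ n (helicoid ω c k) := by
  refine (contDiff_piLp 2).2 fun i => ?_
  fin_cases i <;> simp only [helicoid, Fin.zero_eta, Fin.mk_one, Fin.reduceFinMk, Fin.isValue,
    Matrix.cons_val_zero, Matrix.cons_val_one, Matrix.cons_val] <;> fun_prop

theorem fderiv_apply_one_zero (p : ℝ × ℝ) :
    fderiv ℝ (helicoid ω c k) p (1, 0) =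
      !₂[-((p.2 + c) * ω * sin (ω * p.1)), (p.2 + c) * ω * cos (ω * p.1), k] := by
  refine ((contDiff ω c k (n := 1)).differentiable one_ne_zero p).hasFDerivAt.apply_one_zero_eq ?_
  have hx : HasDerivAt (fun x => ω * x) ω p.1 := by simpa using (hasDerivAt_id p.1).const_mul ω
  exact .toLp_vec3 ((hx.cos.const_mul (p.2 + c)).congr_deriv (by ring))
    ((hx.sin.const_mul (p.2 + c)).congr_deriv (by ring))
    (((hasDerivAt_id' p.1).const_mul k).congr_deriv (mul_one k))

theorem fderiv_apply_zero_one (p : ℝ × ℝ) :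
    fderiv ℝ (helicoid ω c k) p (0, 1) = !₂[cos (ω * p.1), sin (ω * p.1), 0] := by
  refine ((contDiff ω c k (n := 1)).differentiable one_ne_zero p).hasFDerivAt.apply_zero_one_eq ?_
  have hy := (hasDerivAt_id p.2).add_const c
  exact .toLp_vec3 ((hy.mul_const (cos (ω * p.1))).congr_deriv (one_mul _))
    ((hy.mul_const (sin (ω * p.1))).congr_deriv (one_mul _)) (hasDerivAt_const p.2 (k * p.1))

theorem isC11IsometricImmersion (Ω : Set (ℝ × ℝ)) :
    IsC11IsometricImmersion Ω (fun p => ω ^ 2 * (p.2 + c) ^ 2 + k ^ 2) (fun _ => 0) (fun _ => 1)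
      (helicoid ω c k) := by
  refine .of_contDiff (contDiff ω c k) fun p _ => ?_
  simp only [fderiv_apply_one_zero, fderiv_apply_zero_one, EuclideanSpace.inner_vec3]
  have hs := sin_sq_add_cos_sq (ω * p.1)
  refine ⟨?_, ?_, ?_⟩
  · linear_combination (ω ^ 2 * (p.2 + c) ^ 2) * hs
  · ring
  · linear_combination hs

end helicoid

theorem helicoid_type_C11_isometric_immersion_general
    (A B C : ℝ) (hA : 0 < A) (hdisc : B ^ 2 - 4 * A * C < 0)
    (y₀ : ℝ) :
    ∃ f : ℝ × ℝ → EuclideanSpace ℝ (Fin 3),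
      IsC11IsometricImmersion {p : ℝ × ℝ | y₀ < p.2}
        (fun p => A * p.2 ^ 2 + B * p.2 + C) (fun _ => 0) (fun _ => 1) f := by
  have hk : 0 ≤ C - B ^ 2 / (4 * A) := by
    rw [sub_nonneg, div_le_iff₀ (by positivity)]
    linarith
  have hE : (fun p : ℝ × ℝ => A * p.2 ^ 2 + B * p.2 + C) =
      fun p => √A ^ 2 * (p.2 + B / (2 * A)) ^ 2 + √(C - B ^ 2 / (4 * A)) ^ 2 := by
    funext p
    rw [sq_sqrt hA.le, sq_sqrt hk]
    field_simp
    ring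
  exact ⟨_, hE ▸ helicoid.isC11IsometricImmersion _ _ _ _⟩

/-- The helicoid-type metric `g = (Ay² + By + C) dx² + dy²`, with `A > 0`, `B ≥ 0` and
`B² − 4AC < 0`, admits a `C^{1,1}` isometric immersion of any half-plane
`Ω = ℝ × (y₀, ∞)`, `y₀ > 0`, into `ℝ³`. -/
theorem helicoid_type_C11_isometric_immersion
    (A B C : ℝ) (hA : 0 < A) (hB : 0 ≤ B) (hdisc : B ^ 2 - 4 * A * C < 0)
    (y₀ : ℝ) (hy₀ : 0 < y₀) :
    ∃ f : ℝ × ℝ → EuclideanSpace ℝ (Fin 3),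
      IsC11IsometricImmersion {p : ℝ × ℝ | y₀ < p.2}
        (fun p => A * p.2 ^ 2 + B * p.2 + C) (fun _ => 0) (fun _ => 1) f :=
  helicoid_type_C11_isometric_immersion_general A B C hA hdisc y₀
end

section
/- For each real α with 1 ≤ α ≤ 10 there exists a map f from the open wedge Ω = {(x,y) ∈ ℝ² : x > 0, 0 < y < x} into Euclidean ℝ³ which is differentiable on Ω with locally Lipschitz derivative (class C^{1,1}) and satisfies, for every (x,y) ∈ Ω: ⟨∂ₓf, ∂ₓf⟩ = (1 + x² + y²)^α, ⟨∂ₓf, ∂_yf⟩ = 0, ⟨∂_yf, ∂_yf⟩ = (1 + x² + y²)^α. That is, the generalised Enneper metric g^{(α)} admits a C^{1,1} isometric immersion of the wedge Ω into ℝ³. -/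
open Real ContinuousLinearMap
open scoped ContDiff RealInnerProductSpace

noncomputable section

def HasFirstFundamentalFormAt {V : Type*} [NormedAddCommGroup V] [InnerProductSpace ℝ V]
    (f : ℝ × ℝ → V) (p : ℝ × ℝ) (E F G : ℝ) : Prop :=
  ⟪fderiv ℝ f p (1, 0), fderiv ℝ f p (1, 0)⟫ = E ∧
  ⟪fderiv ℝ f p (1, 0), fderiv ℝ f p (0, 1)⟫ = F ∧
  ⟪fderiv ℝ f p (0, 1), fderiv ℝ f p (0, 1)⟫ = G

theorem IsC11IsometricImmersion.of_contDiffAt {Ω : Set (ℝ × ℝ)} {E F G : ℝ × ℝ → ℝ}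
    {f : ℝ × ℝ → EuclideanSpace ℝ (Fin 3)} (hf : ∀ p ∈ Ω, ContDiffAt ℝ 2 f p)
    (hform : ∀ p ∈ Ω, HasFirstFundamentalFormAt f p (E p) (F p) (G p)) :
    IsC11IsometricImmersion Ω E F G f := by
  refine ⟨fun p hp => (hf p hp).differentiableAt (by norm_num), fun p hp => ?_, hform⟩
  obtain ⟨K, t, ht, hK⟩ := ((hf p hp).fderiv_right (m := 1) (by norm_num)).exists_lipschitzOnWith
  obtain ⟨ε, hε, hball⟩ := Metric.mem_nhds_iff.1 ht
  exact ⟨ε, hε, K, hK.mono (Set.inter_subset_left.trans hball)⟩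

theorem inner_smul_add_smul_of_inner_eq_zero {V : Type*} [NormedAddCommGroup V]
    [InnerProductSpace ℝ V] {u w : V} (huw : ⟪u, w⟫ = 0) (a b c d : ℝ) :
    ⟪a • u + b • w, c • u + d • w⟫ = a * c * ⟪u, u⟫ + b * d * ⟪w, w⟫ := by
  simp only [inner_add_left, inner_add_right, inner_smul_left, inner_smul_right,
    real_inner_comm u w, huw, RCLike.conj_to_real]
  ring

theorem EuclideanSpace.inner_fin_three (a b c d e f : ℝ) :
    ⟪!₂[a, b, c], !₂[d, e, f]⟫ = a * d + b * e + c * f := by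
  simp [PiLp.inner_apply, Fin.sum_univ_three, mul_comm]

def halfPlanePolar (p : ℝ × ℝ) : ℝ × ℝ := (√(p.1 ^ 2 + p.2 ^ 2), arctan (p.2 / p.1))

theorem hasFDerivAt_halfPlanePolar {p : ℝ × ℝ} (hx : 0 < p.1) :
    ∃ L : ℝ × ℝ →L[ℝ] ℝ × ℝ, HasFDerivAt halfPlanePolar L p ∧
      L (1, 0) = (p.1 / √(p.1 ^ 2 + p.2 ^ 2), -p.2 / (p.1 ^ 2 + p.2 ^ 2)) ∧
      L (0, 1) = (p.2 / √(p.1 ^ 2 + p.2 ^ 2), p.1 / (p.1 ^ 2 + p.2 ^ 2)) := by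
  have hr : 0 < p.1 ^ 2 + p.2 ^ 2 := by positivity
  have hfst := hasFDerivAt_fst (𝕜 := ℝ) (p := p)
  have hsnd := hasFDerivAt_snd (𝕜 := ℝ) (p := p)
  have hsq := (hfst.pow 2).add (hsnd.pow 2)
  have hquot := hsnd.mul ((hasDerivAt_inv hx.ne').comp_hasFDerivAt p hfst)
  refine ⟨_, (hsq.sqrt hr.ne').prodMk hquot.arctan, ?_, ?_⟩ <;>
    simp only [prod_apply, add_apply, smul_apply, coe_fst', coe_snd', smul_eq_mul,
      nsmul_eq_mul, Pi.add_apply, Pi.mul_apply, Function.comp_apply, Prod.mk.injEq] <;>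
    constructor <;> field_simp <;> norm_num

theorem contDiffAt_halfPlanePolar {p : ℝ × ℝ} (hx : 0 < p.1) {n : WithTop ℕ∞} :
    ContDiffAt ℝ n halfPlanePolar p := by
  have hr : p.1 ^ 2 + p.2 ^ 2 ≠ 0 := by positivity
  exact ((contDiffAt_sqrt hr).comp p (by fun_prop)).prodMk
    (contDiff_arctan.contDiffAt.comp p (contDiffAt_snd.div contDiffAt_fst hx.ne'))

def revolutionSurface (ρ h : ℝ → ℝ) (k : ℝ) (q : ℝ × ℝ) : EuclideanSpace ℝ (Fin 3) :=
  !₂[ρ q.1 * cos (k * q.2), ρ q.1 * sin (k * q.2), h q.1]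

theorem contDiff_revolutionSurface {ρ h : ℝ → ℝ} {k : ℝ} {n : WithTop ℕ∞}
    (hρ : ContDiff ℝ n ρ) (hh : ContDiff ℝ n h) : ContDiff ℝ n (revolutionSurface ρ h k) := by
  refine contDiff_euclidean.2 fun i => ?_
  fin_cases i
  · exact (hρ.comp contDiff_fst).mul (contDiff_cos.comp (contDiff_const.mul contDiff_snd))
  · exact (hρ.comp contDiff_fst).mul (contDiff_sin.comp (contDiff_const.mul contDiff_snd))
  · exact hh.comp contDiff_fst

theorem hasFDerivAt_revolutionSurface {ρ h : ℝ → ℝ} {ρ' h' k : ℝ} {q : ℝ × ℝ}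
    (hρ : HasDerivAt ρ ρ' q.1) (hh : HasDerivAt h h' q.1) :
    HasFDerivAt (revolutionSurface ρ h k)
      ((fst ℝ ℝ ℝ).smulRight !₂[ρ' * cos (k * q.2), ρ' * sin (k * q.2), h'] +
        (snd ℝ ℝ ℝ).smulRight
          !₂[-(k * ρ q.1 * sin (k * q.2)), k * ρ q.1 * cos (k * q.2), 0]) q := by
  have hfst := hasFDerivAt_fst (𝕜 := ℝ) (p := q)
  have hangle := (hasFDerivAt_snd (𝕜 := ℝ) (p := q)).const_mul k
  rw [← hasFDerivWithinAt_univ, hasFDerivWithinAt_euclidean]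
  intro i
  rw [hasFDerivWithinAt_univ]
  fin_cases i
  · refine ((hρ.comp_hasFDerivAt q hfst).mul
      ((hasDerivAt_cos _).comp_hasFDerivAt q hangle)).congr_fderiv ?_
    ext <;> simp [mul_assoc, mul_comm, mul_left_comm]
  · refine ((hρ.comp_hasFDerivAt q hfst).mul
      ((hasDerivAt_sin _).comp_hasFDerivAt q hangle)).congr_fderiv ?_
    ext <;> simp [mul_assoc, mul_comm, mul_left_comm]
  · refine (hh.comp_hasFDerivAt q hfst).congr_fderiv ?_
    ext <;> simp

theorem hasFirstFundamentalFormAt_revolutionSurface_comp_halfPlanePolar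
    {ρ h : ℝ → ℝ} {ρ' h' k L : ℝ} {p : ℝ × ℝ} (hx : 0 < p.1)
    (hρ : HasDerivAt ρ ρ' √(p.1 ^ 2 + p.2 ^ 2)) (hh : HasDerivAt h h' √(p.1 ^ 2 + p.2 ^ 2))
    (hspeed : ρ' ^ 2 + h' ^ 2 = L)
    (hcircle : (k * ρ √(p.1 ^ 2 + p.2 ^ 2)) ^ 2 = (p.1 ^ 2 + p.2 ^ 2) * L) :
    HasFirstFundamentalFormAt (revolutionSurface ρ h k ∘ halfPlanePolar) p L 0 L := by
  obtain ⟨D, hD, hD₁₀, hD₀₁⟩ := hasFDerivAt_halfPlanePolar hx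
  have hfderiv := ((hasFDerivAt_revolutionSurface (k := k) hρ hh).comp p hD).fderiv
  simp only [halfPlanePolar] at hfderiv
  have hpos : 0 < p.1 ^ 2 + p.2 ^ 2 := by positivity
  have hr : 0 < √(p.1 ^ 2 + p.2 ^ 2) := sqrt_pos.2 hpos
  have hr_sq : √(p.1 ^ 2 + p.2 ^ 2) ^ 2 = p.1 ^ 2 + p.2 ^ 2 := sq_sqrt hpos.le
  set r := √(p.1 ^ 2 + p.2 ^ 2)
  set θ := k * arctan (p.2 / p.1)
  set u : EuclideanSpace ℝ (Fin 3) := !₂[ρ' * cos θ, ρ' * sin θ, h']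
  set w : EuclideanSpace ℝ (Fin 3) := !₂[-(k * ρ r * sin θ), k * ρ r * cos θ, 0]
  have hu : ⟪u, u⟫ = L := by
    rw [EuclideanSpace.inner_fin_three, ← hspeed]
    linear_combination ρ' ^ 2 * sin_sq_add_cos_sq θ
  have hw : ⟪w, w⟫ = r ^ 2 * L := by
    rw [EuclideanSpace.inner_fin_three, hr_sq, ← hcircle]
    linear_combination (k * ρ r) ^ 2 * sin_sq_add_cos_sq θ
  have huw : ⟪u, w⟫ = 0 := by
    rw [EuclideanSpace.inner_fin_three]
    ring
  rw [← hr_sq] at hD₁₀ hD₀₁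
  simp only [HasFirstFundamentalFormAt, hfderiv, comp_apply, hD₁₀, hD₀₁, add_apply,
    smulRight_apply, coe_fst', coe_snd', inner_smul_add_smul_of_inner_eq_zero huw, hu, hw]
  refine ⟨?_, ?_, ?_⟩ <;> field_simp
  · linear_combination -L * hr_sq
  · ring
  · linear_combination -L * hr_sq

theorem contDiff_one_add_sq_rpow (a : ℝ) : ContDiff ℝ ∞ fun t : ℝ => (1 + t ^ 2) ^ a :=
  ContDiff.rpow_const_of_ne (by fun_prop) fun t => by positivity

def enneperRadius (α k t : ℝ) : ℝ := t * (1 + t ^ 2) ^ (α / 2) / k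

/-- `dρ/ds`, where `s` is the arclength of the profile curve `t ↦ (ρ t, h t)`. -/
def enneperRadiusRate (α k t : ℝ) : ℝ := (1 + (α + 1) * t ^ 2) / (k * (1 + t ^ 2))

def enneperHeight (α k t : ℝ) : ℝ :=
  ∫ s in (0 : ℝ)..t, (1 + s ^ 2) ^ (α / 2) * √(1 - enneperRadiusRate α k s ^ 2)

def enneperImmersion (α k : ℝ) : ℝ × ℝ → EuclideanSpace ℝ (Fin 3) :=
  revolutionSurface (enneperRadius α k) (enneperHeight α k) k ∘ halfPlanePolar

section

variable {α k : ℝ}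

theorem hasDerivAt_enneperRadius (hk : k ≠ 0) (t : ℝ) :
    HasDerivAt (enneperRadius α k) ((1 + t ^ 2) ^ (α / 2) * enneperRadiusRate α k t) t := by
  have hpos : 0 < 1 + t ^ 2 := by positivity
  have hφ : HasDerivAt (fun s : ℝ => (1 + s ^ 2) ^ (α / 2))
      (2 * t * (α / 2) * (1 + t ^ 2) ^ (α / 2 - 1)) t := by
    simpa using ((hasDerivAt_pow 2 t).const_add 1).rpow_const (p := α / 2) (Or.inl hpos.ne')
  refine ((hasDerivAt_id t).mul hφ).div_const k |>.congr_deriv ?_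
  rw [rpow_sub_one hpos.ne', enneperRadiusRate, id]
  field_simp
  ring

theorem enneperRadiusRate_sq_lt_one (hk₁ : 1 < k) (hk₂ : |α + 1| ≤ k) (t : ℝ) :
    enneperRadiusRate α k t ^ 2 < 1 := by
  have hden : 0 < k * (1 + t ^ 2) := by positivity
  rw [sq_lt_one_iff_abs_lt_one, enneperRadiusRate, abs_div, abs_of_pos hden, div_lt_one hden]
  calc |1 + (α + 1) * t ^ 2| ≤ |1| + |(α + 1) * t ^ 2| := abs_add_le _ _
    _ = 1 + |α + 1| * t ^ 2 := by rw [abs_one, abs_mul, abs_of_nonneg (sq_nonneg t)]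
    _ < k * (1 + t ^ 2) := by nlinarith [sq_nonneg t]

theorem contDiff_enneperRadius : ContDiff ℝ ∞ (enneperRadius α k) :=
  (contDiff_id.mul (contDiff_one_add_sq_rpow _)).div_const k

theorem contDiff_enneperHeight_integrand (hk₁ : 1 < k) (hk₂ : |α + 1| ≤ k) :
    ContDiff ℝ ∞ fun t => (1 + t ^ 2) ^ (α / 2) * √(1 - enneperRadiusRate α k t ^ 2) := by
  have hrate : ContDiff ℝ ∞ (enneperRadiusRate α k) :=
    ContDiff.div (by fun_prop) (by fun_prop) fun t => by positivity
  exact (contDiff_one_add_sq_rpow _).mul <| (contDiff_const.sub (hrate.pow 2)).sqrt fun t =>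
    (sub_pos.2 (enneperRadiusRate_sq_lt_one hk₁ hk₂ t)).ne'

theorem hasDerivAt_enneperHeight (hk₁ : 1 < k) (hk₂ : |α + 1| ≤ k) (t : ℝ) :
    HasDerivAt (enneperHeight α k)
      ((1 + t ^ 2) ^ (α / 2) * √(1 - enneperRadiusRate α k t ^ 2)) t :=
  ((contDiff_enneperHeight_integrand hk₁ hk₂).continuous.integral_hasStrictDerivAt 0 t).hasDerivAt

theorem contDiff_enneperHeight (hk₁ : 1 < k) (hk₂ : |α + 1| ≤ k) :
    ContDiff ℝ ∞ (enneperHeight α k) := by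
  rw [contDiff_infty_iff_deriv]
  refine ⟨fun t => (hasDerivAt_enneperHeight hk₁ hk₂ t).differentiableAt, ?_⟩
  rw [funext fun t => (hasDerivAt_enneperHeight hk₁ hk₂ t).deriv]
  exact contDiff_enneperHeight_integrand hk₁ hk₂

theorem contDiffAt_enneperImmersion (hk₁ : 1 < k) (hk₂ : |α + 1| ≤ k) {p : ℝ × ℝ}
    (hx : 0 < p.1) : ContDiffAt ℝ ∞ (enneperImmersion α k) p :=
  (contDiff_revolutionSurface contDiff_enneperRadius
    (contDiff_enneperHeight hk₁ hk₂)).contDiffAt.comp p (contDiffAt_halfPlanePolar hx)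

theorem hasFirstFundamentalFormAt_enneperImmersion (hk₁ : 1 < k) (hk₂ : |α + 1| ≤ k)
    {p : ℝ × ℝ} (hx : 0 < p.1) :
    HasFirstFundamentalFormAt (enneperImmersion α k) p
      ((1 + p.1 ^ 2 + p.2 ^ 2) ^ α) 0 ((1 + p.1 ^ 2 + p.2 ^ 2) ^ α) := by
  have hr_sq : √(p.1 ^ 2 + p.2 ^ 2) ^ 2 = p.1 ^ 2 + p.2 ^ 2 := sq_sqrt (by positivity)
  set r := √(p.1 ^ 2 + p.2 ^ 2)
  have hφ_sq : ((1 + r ^ 2) ^ (α / 2)) ^ 2 = (1 + p.1 ^ 2 + p.2 ^ 2) ^ α := by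
    rw [← rpow_mul_natCast (by positivity), hr_sq, add_assoc]
    norm_num
  have hrate := enneperRadiusRate_sq_lt_one hk₁ hk₂ r
  refine hasFirstFundamentalFormAt_revolutionSurface_comp_halfPlanePolar hx
    (hasDerivAt_enneperRadius (by positivity) r) (hasDerivAt_enneperHeight hk₁ hk₂ r) ?_ ?_
  · rw [mul_pow, mul_pow, sq_sqrt (sub_nonneg.2 hrate.le), ← hφ_sq]
    ring
  · show (k * enneperRadius α k r) ^ 2 = (p.1 ^ 2 + p.2 ^ 2) * _
    rw [enneperRadius, ← hr_sq, ← hφ_sq]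
    field_simp

end

end

theorem generalised_enneper_C11_isometric_immersion_general
    (α : ℝ) :
    ∃ f : ℝ × ℝ → EuclideanSpace ℝ (Fin 3),
      IsC11IsometricImmersion {p : ℝ × ℝ | 0 < p.1 ∧ 0 < p.2 ∧ p.2 < p.1}
        (fun p => (1 + p.1 ^ 2 + p.2 ^ 2) ^ α) (fun _ => 0)
        (fun p => (1 + p.1 ^ 2 + p.2 ^ 2) ^ α) f := by
  have hk₁ : 1 < |α + 1| + 2 := by linarith [abs_nonneg (α + 1)]
  have hk₂ : |α + 1| ≤ |α + 1| + 2 := by linarith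
  exact ⟨enneperImmersion α (|α + 1| + 2), .of_contDiffAt
    (fun p hp => (contDiffAt_enneperImmersion hk₁ hk₂ hp.1).of_le (by norm_cast))
    (fun p hp => hasFirstFundamentalFormAt_enneperImmersion hk₁ hk₂ hp.1)⟩

/-- For each `1 ≤ α ≤ 10`, the generalised Enneper metric
`g^{(α)} = (1 + x² + y²)^α (dx² + dy²)` admits a `C^{1,1}` isometric immersion of the
open wedge `Ω = {(x,y) : x > 0, 0 < y < x}` into `ℝ³`. -/
theorem generalised_enneper_C11_isometric_immersion
    (α : ℝ) (hα₁ : 1 ≤ α) (hα₂ : α ≤ 10) :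
    ∃ f : ℝ × ℝ → EuclideanSpace ℝ (Fin 3),
      IsC11IsometricImmersion {p : ℝ × ℝ | 0 < p.1 ∧ 0 < p.2 ∧ p.2 < p.1}
        (fun p => (1 + p.1 ^ 2 + p.2 ^ 2) ^ α) (fun _ => 0)
        (fun p => (1 + p.1 ^ 2 + p.2 ^ 2) ^ α) f :=
  generalised_enneper_C11_isometric_immersion_general α
end

section
/- Let c > 0, α > 0 and β ≥ √2 be real constants, and let ψ : ℝ → ℝ be differentiable. Suppose that for every x ∈ ℝ and every y > 0 one has 0 = ψ'(x)/(β² − 1) + c^{α − 1 + 1/(β²−1)} · (sinh(y/c))^{α−1} · ( −α (cosh(y/c))² + (sinh(y/c))²/(β² − 1) ). Then α = 1, β = √2, and ψ'(x) = c for every x ∈ ℝ. -/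
open Real

/-!
Put `s = sinh (y / c)`, which runs over all of `(0, ∞)`, and `K = β² - 1`. Since
`cosh² = 1 + sinh²`, the hypothesis at a fixed `x` says that `-α s^(α-1) + (1/K - α) s^(α+1)`
is constant in `s`. Differentiating and dividing by `s^(α-2)` gives
`-α(α-1) + (1/K - α)(α+1) s² = 0` for all `s > 0`, so both coefficients vanish:
`α = 1` and `K = 1`. The hypothesis then reads `ψ' x = c (cosh² - sinh²) = c`.
-/

theorem exists_pos_sinh_div_eq {c s : ℝ} (hc : 0 < c) (hs : 0 < s) :
    ∃ y, 0 < y ∧ sinh (y / c) = s :=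
  ⟨c * arsinh s, mul_pos hc (arsinh_pos_iff.mpr hs),
    by rw [mul_div_cancel_left₀ _ hc.ne', sinh_arsinh]⟩

theorem hasDerivAt_rpow_add_rpow_add_two {a b p s : ℝ} (hs : 0 < s) :
    HasDerivAt (fun t => a * t ^ p + b * t ^ (p + 2))
      (s ^ (p - 1) * (a * p + b * (p + 2) * s ^ 2)) s := by
  have hp := (hasDerivAt_rpow_const (p := p) (Or.inl hs.ne')).const_mul a
  have hp2 := (hasDerivAt_rpow_const (p := p + 2) (Or.inl hs.ne')).const_mul b
  have hexp : s ^ (p + 2 - 1) = s ^ (p - 1) * s ^ 2 := by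
    rw [show p + 2 - 1 = p - 1 + 2 by ring, rpow_add hs, rpow_two]
  exact (hp.add hp2).congr_deriv (by rw [hexp]; ring)

theorem mul_eq_zero_of_rpow_add_rpow_add_two_eq_const {a b p C : ℝ}
    (h : ∀ s, 0 < s → a * s ^ p + b * s ^ (p + 2) = C) :
    a * p = 0 ∧ b * (p + 2) = 0 := by
  have hcoeff : ∀ s, 0 < s → a * p + b * (p + 2) * s ^ 2 = 0 := by
    intro s hs
    have hC : HasDerivAt (fun t => a * t ^ p + b * t ^ (p + 2)) 0 s :=
      (hasDerivAt_const s C).congr_of_eventuallyEq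
        (Filter.eventually_of_mem (Ioi_mem_nhds hs) h)
    have := hasDerivAt_rpow_add_rpow_add_two (a := a) (b := b) hs |>.unique hC
    exact (mul_eq_zero.mp this).resolve_left (rpow_pos_of_pos hs _).ne'
  have h1 := hcoeff 1 one_pos
  have h2 := hcoeff 2 two_pos
  constructor <;> nlinarith

theorem helicoid_catenoid_deformation_necessity_general
    (c α β : ℝ) (hc : 0 < c) (hα : 0 < α) (hβ : Real.sqrt 2 ≤ β)
    (ψ : ℝ → ℝ)
    (h : ∀ x : ℝ, ∀ y : ℝ, 0 < y →
      0 = deriv ψ x / (β ^ 2 - 1) +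
        c ^ (α - 1 + 1 / (β ^ 2 - 1)) * (Real.sinh (y / c)) ^ (α - 1) *
          (-α * (Real.cosh (y / c)) ^ 2 + (Real.sinh (y / c)) ^ 2 / (β ^ 2 - 1))) :
    α = 1 ∧ β = Real.sqrt 2 ∧ ∀ x : ℝ, deriv ψ x = c := by
  set K := β ^ 2 - 1
  have hcP : 0 < c ^ (α - 1 + 1 / K) := rpow_pos_of_pos hc _
  have hconst : ∀ s, 0 < s → -α * s ^ (α - 1) + (1 / K - α) * s ^ (α - 1 + 2) =
      -(deriv ψ 0 / K) / c ^ (α - 1 + 1 / K) := by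
    intro s hs
    obtain ⟨y, hy, rfl⟩ := exists_pos_sinh_div_eq hc hs
    rw [eq_div_iff hcP.ne', rpow_add hs, rpow_two]
    linear_combination
      -(h 0 y hy) + c ^ (α - 1 + 1 / K) * sinh (y / c) ^ (α - 1) * α * cosh_sq' (y / c)
  obtain ⟨hα_coeff, hK_coeff⟩ := mul_eq_zero_of_rpow_add_rpow_add_two_eq_const hconst
  have hα1 : α = 1 := by nlinarith
  have hK : K = 1 := by
    rw [hα1, one_div] at hK_coeff
    exact inv_eq_one.mp (by linarith)
  have hβ2 : β ^ 2 = 2 := by linarith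
  refine ⟨hα1, ?_, fun x => ?_⟩
  · rw [← hβ2, sqrt_sq ((sqrt_nonneg 2).trans hβ)]
  · have hx := h x c hc
    rw [hK, hα1, div_self hc.ne'] at hx
    simp only [sub_self, zero_add, div_one, rpow_one, rpow_zero] at hx
    linear_combination -hx + c * cosh_sq_sub_sinh_sq 1

/-- Necessity part of the helicoid–catenoid deformation rigidity: if the off-diagonal
metric coefficient of the natural interpolation between the generalised helicoid
`f_hel^{α,ψ}` and the generalised catenoid `f_cat^{β}` vanishes identically, then
`α = 1`, `β = √2` and `ψ' ≡ c`. -/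
theorem helicoid_catenoid_deformation_necessity
    (c α β : ℝ) (hc : 0 < c) (hα : 0 < α) (hβ : Real.sqrt 2 ≤ β)
    (ψ : ℝ → ℝ) (hψ : Differentiable ℝ ψ)
    (h : ∀ x : ℝ, ∀ y : ℝ, 0 < y →
      0 = deriv ψ x / (β ^ 2 - 1) +
        c ^ (α - 1 + 1 / (β ^ 2 - 1)) * (Real.sinh (y / c)) ^ (α - 1) *
          (-α * (Real.cosh (y / c)) ^ 2 + (Real.sinh (y / c)) ^ 2 / (β ^ 2 - 1))) :
    α = 1 ∧ β = Real.sqrt 2 ∧ ∀ x : ℝ, deriv ψ x = c :=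
  helicoid_catenoid_deformation_necessity_general c α β hc hα hβ ψ h
end

section
/- Let α > 0, μ ∈ ℝ and K ≠ 0 be real constants. If the function S(z) = K · z^{α−1} · (−α + μ z²) is constant on the interval (0, ∞) (where z^{α−1} denotes the real power of the positive real z), then α = 1 and μ = 0. -/
open Real

/-- If `S(z) = K z^{α−1}(−α + μ z²)` (with `K ≠ 0`, `α > 0`) is constant on `(0, ∞)`,
then `α = 1` and `μ = 0`. This is the key step showing that the natural interpolation
between a generalised helicoid and a generalised catenoid is an isometric deformation
only for the classical pair. -/
theorem power_cubic_constant_rigidity (α μ K : ℝ) (hα : 0 < α) (hK : K ≠ 0)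
    (h : ∀ z₁ ∈ Set.Ioi (0 : ℝ), ∀ z₂ ∈ Set.Ioi (0 : ℝ),
      K * z₁ ^ (α - 1) * (-α + μ * z₁ ^ 2) = K * z₂ ^ (α - 1) * (-α + μ * z₂ ^ 2)) :
    α = 1 ∧ μ = 0 := by
  set t : ℝ := (2 : ℝ) ^ (α - 1) with ht
  have ht0 : 0 < t := Real.rpow_pos_of_pos two_pos _
  -- Key: comparing S(2z) with S(z) and cancelling K·z^(α−1):
  have key : ∀ z : ℝ, 0 < z → t * (-α + μ * (2 * z) ^ 2) = -α + μ * z ^ 2 := by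
    intro z hz
    have hzz : (0 : ℝ) < 2 * z := by linarith
    have h1 := h (2 * z) (Set.mem_Ioi.mpr hzz) z (Set.mem_Ioi.mpr hz)
    have hsplit : (2 * z) ^ (α - 1) = t * z ^ (α - 1) :=
      Real.mul_rpow (by norm_num) hz.le
    rw [hsplit] at h1
    have hc : K * z ^ (α - 1) ≠ 0 :=
      mul_ne_zero hK (Real.rpow_pos_of_pos hz _).ne'
    apply mul_left_cancel₀ hc
    ring_nf
    ring_nf at h1
    linarith
  have k1 := key 1 one_pos
  have k2 := key 2 two_pos
  -- From k1, k2: μ * (4t - 1) = 0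
  have hμ4 : μ * (4 * t - 1) = 0 := by nlinarith [k1, k2]
  have h4t : (1 : ℝ) < 4 * t := by
    have h22 : (2 : ℝ) ^ (2 : ℝ) = 4 := by
      have h := Real.rpow_natCast (2 : ℝ) 2
      norm_num at h
      linarith
    have : (4 : ℝ) * t = (2 : ℝ) ^ (α + 1) := by
      rw [ht, show α + 1 = (α - 1) + 2 from by ring, Real.rpow_add two_pos, h22]
      ring
    rw [this]
    have := Real.rpow_lt_rpow_left_iff (x := 2) (y := 0) (z := α + 1) one_lt_two
    have h0 : (2 : ℝ) ^ (0 : ℝ) < (2 : ℝ) ^ (α + 1) := this.mpr (by linarith)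
    simpa using h0
  have hμ : μ = 0 := by
    rcases mul_eq_zero.mp hμ4 with hμ | habs
    · exact hμ
    · linarith
  subst hμ
  have ht1 : t = 1 := by
    have : t * (-α) = -α := by simpa using k1
    have hαne : (-α) ≠ 0 := by linarith
    have h1t : t * (-α) = 1 * (-α) := by linarith
    exact mul_right_cancel₀ hαne h1t
  have hα1 : α = 1 := by
    have : (2 : ℝ) ^ (α - 1) = (2 : ℝ) ^ (0 : ℝ) := by
      rw [← ht, ht1, Real.rpow_zero]
    rcases lt_trichotomy (α - 1) 0 with hlt | heq | hgt
    · have := (Real.rpow_lt_rpow_left_iff (x := 2) one_lt_two).mpr hlt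
      exact absurd this (by rw [‹(2:ℝ) ^ (α-1) = _›]; simp)
    · linarith
    · have := (Real.rpow_lt_rpow_left_iff (x := 2) one_lt_two).mpr hgt
      exact absurd this (by rw [‹(2:ℝ) ^ (α-1) = _›]; simp)
  exact ⟨hα1, rfl⟩
end

section
/- Let ρ ≠ 0 and m be real numbers. The characteristic polynomial of the real 2×2 matrix M(ρ,m) = [[0, 1], [−(m²−1)/ρ², 2m/ρ]] factors as (X − (m+1)/ρ)(X − (m−1)/ρ); consequently M(ρ,m) has exactly the two eigenvalues λ₊ = (m+1)/ρ and λ₋ = (m−1)/ρ, and these are distinct real numbers. Hence the flux Jacobian of the fluid formulation of the Gauss–Codazzi system with negative curvature is diagonalisable over ℝ with distinct eigenvalues, i.e. the associated balance law is strictly hyperbolic. -/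
open Polynomial

/-- The flux Jacobian `∇F(U) = [[0,1],[−(m²−1)/ρ², 2m/ρ]]` of the fluid formulation of
the Gauss–Codazzi system with negative curvature has characteristic polynomial
`(X − (m+1)/ρ)(X − (m−1)/ρ)`; its eigenvalues are exactly the two distinct real numbers
`λ± = (m ± 1)/ρ`, so the associated balance law is strictly hyperbolic. -/
theorem gauss_codazzi_flux_jacobian_strictly_hyperbolic (ρ m : ℝ) (hρ : ρ ≠ 0) :
    (Matrix.charpoly (!![0, 1; -(m ^ 2 - 1) / ρ ^ 2, 2 * m / ρ] : Matrix (Fin 2) (Fin 2) ℝ) =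
       (X - Polynomial.C ((m + 1) / ρ)) * (X - Polynomial.C ((m - 1) / ρ))) ∧
    spectrum ℝ (!![0, 1; -(m ^ 2 - 1) / ρ ^ 2, 2 * m / ρ] : Matrix (Fin 2) (Fin 2) ℝ) =
      {(m + 1) / ρ, (m - 1) / ρ} ∧
    (m + 1) / ρ ≠ (m - 1) / ρ := by
  set A : Matrix (Fin 2) (Fin 2) ℝ := !![0, 1; -(m ^ 2 - 1) / ρ ^ 2, 2 * m / ρ] with hA
  have h1 : (m + 1) / ρ + (m - 1) / ρ = 2 * m / ρ := by field_simp; ring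
  have h2 : (m + 1) / ρ * ((m - 1) / ρ) = (m ^ 2 - 1) / ρ ^ 2 := by
    field_simp; ring
  have hchar : A.charpoly = (X - C ((m + 1) / ρ)) * (X - C ((m - 1) / ρ)) := by
    rw [Matrix.charpoly, Matrix.det_fin_two]
    have e00 : A.charmatrix 0 0 = X - C 0 := Matrix.charmatrix_apply_eq A 0
    have e11 : A.charmatrix 1 1 = X - C (2 * m / ρ) := Matrix.charmatrix_apply_eq A 1
    have e01 : A.charmatrix 0 1 = -C 1 := Matrix.charmatrix_apply_ne A 0 1 (by decide)
    have e10 : A.charmatrix 1 0 = -C (-(m ^ 2 - 1) / ρ ^ 2) :=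
      Matrix.charmatrix_apply_ne A 1 0 (by decide)
    have h3 : -(m ^ 2 - 1) / ρ ^ 2 = -((m + 1) / ρ * ((m - 1) / ρ)) := by
      rw [h2]; ring
    rw [e00, e11, e01, e10, ← h1, h3]
    simp only [map_add, map_neg, map_mul, map_zero, C_1]
    ring
  refine ⟨hchar, ?_, ?_⟩
  · ext x
    have hAeq : (algebraMap ℝ (Matrix (Fin 2) (Fin 2) ℝ)) x - A =
        !![x, -1; (m ^ 2 - 1) / ρ ^ 2, x - 2 * m / ρ] := by
      ext i j
      fin_cases i <;> fin_cases j <;>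
        (simp [hA, Matrix.algebraMap_matrix_apply]; try ring)
    have hdet2 : ((algebraMap ℝ (Matrix (Fin 2) (Fin 2) ℝ)) x - A).det =
        (x - (m + 1) / ρ) * (x - (m - 1) / ρ) := by
      rw [hAeq, Matrix.det_fin_two_of]
      field_simp
      ring
    simp only [spectrum.mem_iff, Set.mem_insert_iff, Set.mem_singleton_iff]
    rw [Matrix.isUnit_iff_isUnit_det, hdet2, isUnit_iff_ne_zero, not_ne_iff, mul_eq_zero,
      sub_eq_zero, sub_eq_zero]
  · intro h
    have : (m + 1) = (m - 1) := by
      field_simp at h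
      linarith
    linarith
end

section
/- Fix k > 0 and define the cubic polynomials ℘₁(u,v) = 3u + k(u−v)(u+v)² and ℘₂(u,v) = 3u + k(u+v)(u−v)². For real numbers w₁ < w₂ and z₁ < z₂, write u(w,z) = (w+z)/2 and v(w,z) = (w−z)/2. Then it is impossible that all four of the following hold simultaneously: (i) ℘₁(u(w₂,z), v(w₂,z)) ≥ 0 for all z ∈ [z₁,z₂]; (ii) ℘₂(u(w,z₂), v(w,z₂)) ≥ 0 for all w ∈ [w₁,w₂]; (iii) ℘₁(u(w₁,z), v(w₁,z)) ≤ 0 for all z ∈ [z₁,z₂]; (iv) ℘₂(u(w,z₁), v(w,z₁)) ≤ 0 for all w ∈ [w₁,w₂]. Consequently, no square in the Riemann-invariant coordinates (w,z) = (u+v, u−v) is an invariant region for the Gauss–Codazzi balance law of the reciprocal-type metrics. -/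
/-- Non-existence of square invariant regions for the reciprocal-type metrics: with
`℘₁(u,v) = 3u + k(u−v)(u+v)²` and `℘₂(u,v) = 3u + k(u+v)(u−v)²`, `k > 0`, no square
`[w₁,w₂] × [z₁,z₂]` in the Riemann-invariant coordinates `w = u+v`, `z = u−v` can
satisfy the Chueh–Conley–Smoller sign conditions on its four edges. -/
theorem reciprocal_type_no_invariant_region (k : ℝ) (hk : 0 < k)
    (w₁ w₂ z₁ z₂ : ℝ) (hw : w₁ < w₂) (hz : z₁ < z₂)
    (u v : ℝ → ℝ → ℝ)
    (hu : u = fun w z => (w + z) / 2) (hv : v = fun w z => (w - z) / 2)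
    (℘₁ ℘₂ : ℝ → ℝ → ℝ)
    (h℘₁ : ℘₁ = fun a b => 3 * a + k * (a - b) * (a + b) ^ 2)
    (h℘₂ : ℘₂ = fun a b => 3 * a + k * (a + b) * (a - b) ^ 2)
    (h₁ : ∀ z ∈ Set.Icc z₁ z₂, 0 ≤ ℘₁ (u w₂ z) (v w₂ z))
    (h₂ : ∀ w ∈ Set.Icc w₁ w₂, 0 ≤ ℘₂ (u w z₂) (v w z₂))
    (h₃ : ∀ z ∈ Set.Icc z₁ z₂, ℘₁ (u w₁ z) (v w₁ z) ≤ 0)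
    (h₄ : ∀ w ∈ Set.Icc w₁ w₂, ℘₂ (u w z₁) (v w z₁) ≤ 0) :
    False := by
  subst hu hv h℘₁ h℘₂
  have A := h₁ z₁ ⟨le_rfl, hz.le⟩
  have B := h₂ w₁ ⟨le_rfl, hw.le⟩
  have C := h₃ z₂ ⟨hz.le, le_rfl⟩
  have D := h₄ w₂ ⟨hw.le, le_rfl⟩
  simp only at A B C D
  -- A : 0 ≤ 3(w₂+z₁)/2 + k z₁ w₂² ; D : 3(w₂+z₁)/2 + k w₂ z₁² ≤ 0
  -- B : 0 ≤ 3(w₁+z₂)/2 + k w₁ z₂² ; C : 3(w₁+z₂)/2 + k z₂ w₁² ≤ 0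
  rcases le_or_gt w₂ 0 with hw₂ | hw₂
  · rcases le_or_gt z₂ 0 with hz₂ | hz₂
    · -- z₁ < z₂ ≤ 0 and w₂ ≤ 0 contradict A
      have hz₁ : z₁ < 0 := hz.trans_le hz₂
      nlinarith [mul_nonpos_of_nonneg_of_nonpos hk.le (mul_nonpos_of_nonpos_of_nonneg hz₁.le (sq_nonneg w₂))]
    · -- z₂ > 0 : C forces w₁ < 0, then B - C gives k w₁ z₂ (z₂ - w₁) ≥ 0, contradiction
      have hw₁ : w₁ < 0 := by
        nlinarith [mul_nonneg hk.le (mul_nonneg hz₂.le (sq_nonneg w₁))]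
      nlinarith [mul_pos (mul_pos hk (mul_pos (neg_pos.mpr hw₁) hz₂)) (by linarith : (0:ℝ) < z₂ - w₁)]
  · -- w₂ > 0 : D forces z₁ < 0, then A - D gives k w₂ z₁ (w₂ - z₁) ≥ 0, contradiction
    have hz₁ : z₁ < 0 := by
      nlinarith [mul_nonneg hk.le (mul_nonneg hw₂.le (sq_nonneg z₁))]
    nlinarith [mul_pos (mul_pos hk (mul_pos hw₂ (neg_pos.mpr hz₁))) (by linarith : (0:ℝ) < w₂ - z₁)]
end
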